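/- For the symmetric simple random walk on ℤ started at 0, for b ∈ ℤ and real r with 0 < r < 1, ∑_{n=0}^∞ r^n P_0(w_n = b) = (1/√(1-r²)) · ζ(1/r)^{|b|}, where ζ(x) = x - √(x²-1). Equivalently, with r = 2ν/(2+λ) for ν ∈ (0,1] and λ > 0, the sum equals ((2+λ)/√((2+λ)² - 4ν²)) ζ((2+λ)/(2ν))^{|b|}. -/

import Mathlib

/-!
Conditioning on the first step, the generating function `q c = ∑ rⁿ P(wₙ = c)` satisfies
`q c = [c = 0] + (r/2) (q (c - 1) + q (c + 1))`, and it is bounded by `(1 - r)⁻¹`. Away from the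
origin this is a linear recurrence with characteristic roots `ζ = 1/r - √(1/r² - 1) < 1` and
`1/ζ > 1`; boundedness on each half-line kills the growing root, so `q c = q 0 ζ^|c|`. The equation
at the origin then reads `q 0 (1 - r ζ) = 1`, and `1 - r ζ = √(1 - r²)`.
-/

open MeasureTheory ProbabilityTheory Finset

lemma eq_zero_of_forall_abs_mul_pow_le {c w M : ℝ} (hw : 1 < w)
    (hbd : ∀ k : ℕ, |c * w ^ k| ≤ M) : c = 0 := by
  by_contra hc
  obtain ⟨k, hk⟩ := pow_unbounded_of_one_lt (M / |c|) hw
  have hck := hbd k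
  rw [abs_mul, abs_of_pos (pow_pos (zero_lt_one.trans hw) k)] at hck
  rw [div_lt_iff₀ (abs_pos.2 hc)] at hk
  linarith

/-- `u (k + 1) - z * u k` is geometric with ratio `w > 1`, so boundedness forces it to vanish. -/
lemma eq_mul_pow_of_bounded_of_recurrence {u : ℕ → ℝ} {z w M : ℝ} (hw : 1 < w)
    (hzw : z * w = 1) (hrec : ∀ k, u (k + 2) = (z + w) * u (k + 1) - u k)
    (hbd : ∀ k, |u k| ≤ M) (k : ℕ) : u k = u 0 * z ^ k := by
  have hz0 : 0 < z := pos_of_mul_pos_left (hzw ▸ one_pos) (zero_lt_one.trans hw).le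
  have hz1 : z ≤ 1 := by nlinarith
  have hgeom : ∀ k, u (k + 1) - z * u k = (u 1 - z * u 0) * w ^ k := by
    intro k
    induction k with
    | zero => ring
    | succ k ih =>
      rw [pow_succ, ← mul_assoc, ← ih, hrec]
      linear_combination u k * hzw
  have hfirst : u 1 - z * u 0 = 0 := by
    refine eq_zero_of_forall_abs_mul_pow_le (M := M + M) hw fun k => ?_
    rw [← hgeom]
    have hzu : |z * u k| ≤ M := by
      rw [abs_mul, abs_of_pos hz0]
      nlinarith [hbd k, abs_nonneg (u k)]
    linarith [abs_sub (u (k + 1)) (z * u k), hbd (k + 1)]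
  induction k with
  | zero => ring
  | succ k ih =>
    have := hgeom k
    rw [hfirst, zero_mul] at this
    rw [pow_succ, ← mul_assoc, ← ih]
    linarith

lemma eq_mul_pow_natAbs_of_bounded_of_recurrence {q : ℤ → ℝ} {z w M : ℝ} (hw : 1 < w)
    (hzw : z * w = 1) (hrec : ∀ c ≠ 0, (z + w) * q c = q (c - 1) + q (c + 1))
    (hbd : ∀ c, |q c| ≤ M) (c : ℤ) : q c = q 0 * z ^ c.natAbs := by
  have hpos : ∀ k : ℕ, q k = q 0 * z ^ k := by
    refine eq_mul_pow_of_bounded_of_recurrence (u := fun k : ℕ => q k) hw hzw (fun k => ?_)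
      (fun k => hbd k)
    have := hrec ((k : ℤ) + 1) (by omega)
    push_cast
    rw [add_sub_cancel_right, add_assoc, one_add_one_eq_two] at this
    linarith
  have hneg : ∀ k : ℕ, q (-k) = q 0 * z ^ k := by
    refine eq_mul_pow_of_bounded_of_recurrence (u := fun k : ℕ => q (-k)) hw hzw (fun k => ?_)
      (fun k => hbd (-k))
    have := hrec (-((k : ℤ) + 1)) (by omega)
    push_cast
    rw [show -((k : ℤ) + 1) - 1 = -(k + 2) by ring, show -((k : ℤ) + 1) + 1 = -k by ring] at this
    linarith
  rcases Int.natAbs_eq c with hc | hc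
  · rw [hc, hpos, Int.natAbs_natCast]
  · rw [hc, hneg, Int.natAbs_neg, Int.natAbs_natCast]

lemma eq_of_bounded_of_forall_eq_ite_add {q : ℤ → ℝ} {r M : ℝ} (hr0 : 0 < r) (hr1 : r < 1)
    (hq : ∀ c, q c = (if c = 0 then 1 else 0) + r / 2 * (q (c - 1) + q (c + 1)))
    (hbd : ∀ c, |q c| ≤ M) (c : ℤ) :
    q c = 1 / Real.sqrt (1 - r ^ 2) * (1 / r - Real.sqrt ((1 / r) ^ 2 - 1)) ^ c.natAbs := by
  set s := Real.sqrt ((1 / r) ^ 2 - 1)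
  have hs_sq : s ^ 2 = (1 / r) ^ 2 - 1 := Real.sq_sqrt (by nlinarith [one_lt_one_div hr0 hr1])
  have hs0 : 0 < s := Real.sqrt_pos.2 (by nlinarith [one_lt_one_div hr0 hr1])
  have hrs : Real.sqrt (1 - r ^ 2) = r * s := by
    rw [← Real.sqrt_sq (mul_pos hr0 hs0).le, mul_pow, hs_sq]
    congr 1
    field_simp
  have hrec : ∀ c ≠ 0, ((1 / r - s) + (1 / r + s)) * q c = q (c - 1) + q (c + 1) := by
    intro c hc
    rw [hq c, if_neg hc]
    field_simp
    ring
  have hzw : (1 / r - s) * (1 / r + s) = 1 := by nlinarith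
  have hw : 1 < 1 / r + s := by linarith [one_lt_one_div hr0 hr1]
  have hpow := eq_mul_pow_natAbs_of_bounded_of_recurrence hw hzw hrec hbd
  -- at the origin the equation reads `q 0 = 1 + r (1/r - s) q 0`, i.e. `r s q 0 = 1`
  have hq0 : q 0 * (r * s) = 1 := by
    have := hq 0
    rw [if_pos rfl, zero_sub, zero_add, hpow (-1), hpow 1] at this
    simp only [Int.natAbs_neg, Int.natAbs_one, pow_one] at this
    field_simp at this
    linarith
  rw [hpow c, hrs, eq_div_of_mul_eq (mul_pos hr0 hs0).ne' hq0]

lemma summable_pow_mul_of_abs_le_one {f : ℕ → ℝ} {r : ℝ} (hr0 : 0 ≤ r) (hr1 : r < 1)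
    (hf : ∀ n, |f n| ≤ 1) : Summable fun n => r ^ n * f n :=
  .of_norm_bounded (summable_geometric_of_lt_one hr0 hr1) fun n => by
    rw [Real.norm_eq_abs, abs_mul, abs_of_nonneg (pow_nonneg hr0 n)]
    exact mul_le_of_le_one_right (pow_nonneg hr0 n) (hf n)

lemma abs_tsum_pow_mul_le_of_abs_le_one {f : ℕ → ℝ} {r : ℝ} (hr0 : 0 ≤ r) (hr1 : r < 1)
    (hf : ∀ n, |f n| ≤ 1) : |∑' n, r ^ n * f n| ≤ (1 - r)⁻¹ :=
  tsum_of_norm_bounded (f := fun n => r ^ n * f n) (hasSum_geometric_of_lt_one hr0 hr1) fun n => by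
    rw [Real.norm_eq_abs, abs_mul, abs_of_nonneg (pow_nonneg hr0 n)]
    exact mul_le_of_le_one_right (pow_nonneg hr0 n) (hf n)

lemma tsum_pow_mul_eq_ite_add {p : ℕ → ℤ → ℝ} {r : ℝ} (hr0 : 0 ≤ r) (hr1 : r < 1)
    (hbd : ∀ n c, |p n c| ≤ 1) (hp0 : ∀ c, p 0 c = if c = 0 then 1 else 0)
    (hsucc : ∀ n c, p (n + 1) c = (p n (c - 1) + p n (c + 1)) / 2) (c : ℤ) :
    ∑' n, r ^ n * p n c = (if c = 0 then 1 else 0)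
      + r / 2 * (∑' n, r ^ n * p n (c - 1) + ∑' n, r ^ n * p n (c + 1)) := by
  have hsum : ∀ c, Summable fun n => r ^ n * p n c := fun c =>
    summable_pow_mul_of_abs_le_one hr0 hr1 (hbd · c)
  rw [(hsum c).tsum_eq_zero_add, pow_zero, one_mul, hp0,
    ← (hsum (c - 1)).tsum_add (hsum (c + 1)), ← tsum_mul_left]
  congr 2 with n
  rw [hsucc, pow_succ]
  ring

section RandomWalk

variable {Ω : Type*} [MeasurableSpace Ω] {μ : Measure Ω} [IsProbabilityMeasure μ]

lemma ae_eq_one_or_eq_neg_one {Y : Ω → ℤ} (hY : Measurable Y)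
    (h1 : μ {ω | Y ω = 1} = ENNReal.ofReal (1 / 2))
    (h2 : μ {ω | Y ω = -1} = ENNReal.ofReal (1 / 2)) :
    ∀ᵐ ω ∂μ, Y ω = 1 ∨ Y ω = -1 := by
  rw [ae_iff_prob_eq_one (by fun_prop), Set.ofPred_or,
    measure_union (by grind) (s₂ := {ω | Y ω = -1}) (hY (measurableSet_singleton _)), h1, h2,
    ← ENNReal.ofReal_add (by norm_num) (by norm_num)]
  norm_num

lemma measure_sum_range_succ_eq {X : ℕ → Ω → ℤ} (hmeas : ∀ i, Measurable (X i))
    (hindep : iIndepFun (m := fun _ : ℕ => (inferInstance : MeasurableSpace ℤ)) X μ)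
    (hstep : ∀ i, μ {ω | X i ω = 1} = ENNReal.ofReal (1 / 2) ∧
      μ {ω | X i ω = -1} = ENNReal.ofReal (1 / 2))
    (n : ℕ) (b : ℤ) :
    μ {ω | ∑ i ∈ range (n + 1), X i ω = b}
      = μ {ω | ∑ i ∈ range n, X i ω = b - 1} * ENNReal.ofReal (1 / 2)
      + μ {ω | ∑ i ∈ range n, X i ω = b + 1} * ENNReal.ofReal (1 / 2) := by
  set S := ∑ i ∈ range n, X i
  have hS : ∀ ω, S ω = ∑ i ∈ range n, X i ω := fun ω => Finset.sum_apply ω _ _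
  have hSm : Measurable S := funext hS ▸ measurable_sum (range n) fun i _ => hmeas i
  have hind : IndepFun S (X n) μ := hindep.indepFun_finsetSum_of_notMem hmeas notMem_range_self
  have hsplit : {ω | ∑ i ∈ range (n + 1), X i ω = b}
      =ᵐ[μ] ((S ⁻¹' {b - 1} ∩ X n ⁻¹' {1}) ∪ (S ⁻¹' {b + 1} ∩ X n ⁻¹' {-1}) : Set Ω) := by
    refine Filter.eventuallyEq_set.2 ?_
    filter_upwards [ae_eq_one_or_eq_neg_one (hmeas n) (hstep n).1 (hstep n).2] with ω hω
    simp only [Set.mem_union, Set.mem_inter_iff, Set.mem_preimage,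
      Set.mem_singleton_iff, sum_range_succ, hS]
    omega
  have hdisj : Disjoint (S ⁻¹' {b - 1} ∩ X n ⁻¹' {1}) (S ⁻¹' {b + 1} ∩ X n ⁻¹' {-1}) :=
    Set.disjoint_left.2 fun ω h h' => by simp_all
  rw [measure_congr hsplit,
    measure_union hdisj
      ((hSm (measurableSet_singleton _)).inter (hmeas n (measurableSet_singleton _))),
    hind.measure_inter_preimage_eq_mul _ _ (measurableSet_singleton _) (measurableSet_singleton _),
    hind.measure_inter_preimage_eq_mul _ _ (measurableSet_singleton _) (measurableSet_singleton _)]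
  simp only [Set.preimage, Set.mem_singleton_iff, hS, (hstep n).1, (hstep n).2]

theorem tsum_pow_mul_measure_sum_range_eq {X : ℕ → Ω → ℤ} (hmeas : ∀ i, Measurable (X i))
    (hindep : iIndepFun (m := fun _ : ℕ => (inferInstance : MeasurableSpace ℤ)) X μ)
    (hstep : ∀ i, μ {ω | X i ω = 1} = ENNReal.ofReal (1 / 2) ∧
      μ {ω | X i ω = -1} = ENNReal.ofReal (1 / 2))
    (b : ℤ) {r : ℝ} (hr0 : 0 < r) (hr1 : r < 1) :
    ∑' n : ℕ, r ^ n * (μ {ω | ∑ i ∈ range n, X i ω = b}).toReal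
      = 1 / Real.sqrt (1 - r ^ 2) * (1 / r - Real.sqrt ((1 / r) ^ 2 - 1)) ^ b.natAbs := by
  set p : ℕ → ℤ → ℝ := fun n c => (μ {ω | ∑ i ∈ range n, X i ω = c}).toReal
  have hbd : ∀ n c, |p n c| ≤ 1 := fun n c => by
    rw [abs_of_nonneg ENNReal.toReal_nonneg]
    exact measureReal_le_one
  have hp0 : ∀ c, p 0 c = if c = 0 then 1 else 0 := fun c => by
    split_ifs with hc <;> simp [p, hc, eq_comm]
  have hsucc : ∀ n c, p (n + 1) c = (p n (c - 1) + p n (c + 1)) / 2 := fun n c => by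
    simp only [p]
    rw [measure_sum_range_succ_eq hmeas hindep hstep,
      ENNReal.toReal_add (by finiteness) (by finiteness), ENNReal.toReal_mul, ENNReal.toReal_mul,
      ENNReal.toReal_ofReal one_half_pos.le]
    ring
  exact eq_of_bounded_of_forall_eq_ite_add hr0 hr1
    (tsum_pow_mul_eq_ite_add hr0.le hr1 hbd hp0 hsucc)
    (fun c => abs_tsum_pow_mul_le_of_abs_le_one hr0.le hr1 (hbd · c)) b

end RandomWalk

lemma one_div_sqrt_one_sub_div_sq {a t : ℝ} (ha : 0 < a) :
    1 / Real.sqrt (1 - (t / a) ^ 2) = a / Real.sqrt (a ^ 2 - t ^ 2) := by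
  rw [show 1 - (t / a) ^ 2 = (a ^ 2 - t ^ 2) / a ^ 2 by field_simp,
    Real.sqrt_div' _ (sq_nonneg a), Real.sqrt_sq ha.le, one_div_div]

theorem stmt10 {Ω : Type*} [MeasurableSpace Ω] (μ : Measure Ω) [IsProbabilityMeasure μ]
    (X : ℕ → Ω → ℤ) (hmeas : ∀ i, Measurable (X i))
    (hindep : iIndepFun (m := fun _ : ℕ => (inferInstance : MeasurableSpace ℤ)) X μ)
    (hstep : ∀ i, μ {ω | X i ω = 1} = ENNReal.ofReal (1 / 2) ∧
      μ {ω | X i ω = -1} = ENNReal.ofReal (1 / 2))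
    (b : ℤ) :
    (∀ r : ℝ, 0 < r → r < 1 →
      (∑' n : ℕ, r ^ n * (μ {ω | ∑ i ∈ Finset.range n, X i ω = b}).toReal)
        = (1 / Real.sqrt (1 - r ^ 2)) *
            (1 / r - Real.sqrt ((1 / r) ^ 2 - 1)) ^ b.natAbs) ∧
    (∀ ν lam : ℝ, 0 < ν → ν ≤ 1 → 0 < lam →
      (∑' n : ℕ, (2 * ν / (2 + lam)) ^ n *
          (μ {ω | ∑ i ∈ Finset.range n, X i ω = b}).toReal)
        = ((2 + lam) / Real.sqrt ((2 + lam) ^ 2 - 4 * ν ^ 2)) *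
            ((2 + lam) / (2 * ν) - Real.sqrt (((2 + lam) / (2 * ν)) ^ 2 - 1)) ^ b.natAbs) := by
  have hgen := fun r (hr0 : 0 < r) => tsum_pow_mul_measure_sum_range_eq hmeas hindep hstep b hr0
  refine ⟨hgen, fun ν lam hν0 hν1 hlam => ?_⟩
  have ha : 0 < 2 + lam := by linarith
  have hr0 : 0 < 2 * ν / (2 + lam) := by positivity
  rw [hgen _ hr0 ((div_lt_one ha).2 (by linarith)), one_div_div,
    one_div_sqrt_one_sub_div_sq ha, mul_pow]
  norm_num
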